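/- Let ρ, A, B be positive semidefinite d×d complex matrices with B − A positive semidefinite. Then tr((√ρ A √ρ)^{1/2}) ≤ tr((√ρ B √ρ)^{1/2}); that is, the fidelity F(ρ, ·) is monotone with respect to the Loewner order in its second argument. -/

import Mathlib

/-!
`psqrt` is the continuous functional calculus square root `CFC.sqrt` on the C⋆-algebra of
matrices with the Loewner order (both vanish off the positive semidefinite cone). Conjugation by
`√ρ` preserves the Loewner order, `CFC.sqrt` is operator monotone (Löwner–Heinz), and the trace is
monotone; composing the three gives the claim.
-/

open Matrix BigOperators ComplexOrder Classical

/-- The positive semidefinite square root of a matrix (junk value `0` if the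
matrix is not positive semidefinite). -/
noncomputable def psqrt {d : ℕ} (A : Matrix (Fin d) (Fin d) ℂ) :
    Matrix (Fin d) (Fin d) ℂ :=
  if h : A.PosSemidef then
    (h.1.eigenvectorUnitary : Matrix (Fin d) (Fin d) ℂ) *
      diagonal ((↑) ∘ (√·) ∘ h.1.eigenvalues) *
      (star h.1.eigenvectorUnitary : Matrix (Fin d) (Fin d) ℂ)
  else 0

open scoped MatrixOrder Matrix.Norms.L2Operator

theorem psqrt_eq_sqrt {d : ℕ} (A : Matrix (Fin d) (Fin d) ℂ) : psqrt A = CFC.sqrt A := by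
  unfold psqrt
  split_ifs with hA
  · rw [CFC.sqrt_eq_real_sqrt A hA.nonneg, cfcₙ_eq_cfc, hA.1.cfc_eq, IsHermitian.cfc,
      Unitary.conjStarAlgAut_apply]
    rfl
  · exact (CFC.sqrt_of_not_nonneg fun h => hA h.posSemidef).symm

theorem Matrix.trace_mono {𝕜 n : Type*} [RCLike 𝕜] [Fintype n] :
    Monotone (trace : Matrix n n 𝕜 → 𝕜) := fun A B hAB => by
  simpa only [trace_sub, sub_nonneg] using (Matrix.le_iff.mp hAB).trace_nonneg

theorem fidelity_monotone_right_general
    {d : ℕ} (ρ A B : Matrix (Fin d) (Fin d) ℂ)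
    (hAB : (B - A).PosSemidef) :
    (psqrt (psqrt ρ * A * psqrt ρ)).trace.re ≤
      (psqrt (psqrt ρ * B * psqrt ρ)).trace.re := by
  simp only [psqrt_eq_sqrt]
  have hconj : CFC.sqrt ρ * A * CFC.sqrt ρ ≤ CFC.sqrt ρ * B * CFC.sqrt ρ :=
    (CFC.sqrt_nonneg ρ).isSelfAdjoint.conjugate_le_conjugate hAB
  exact Complex.re_le_re <| Matrix.trace_mono <| CFC.sqrt_le_sqrt _ _ hconj

/-- Monotonicity of the fidelity `F(ρ,·) = tr((√ρ · √ρ)^{1/2})` in its second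
argument with respect to the Loewner order. -/
theorem fidelity_monotone_right
    {d : ℕ} (ρ A B : Matrix (Fin d) (Fin d) ℂ)
    (hρ : ρ.PosSemidef) (hA : A.PosSemidef) (hB : B.PosSemidef)
    (hAB : (B - A).PosSemidef) :
    (psqrt (psqrt ρ * A * psqrt ρ)).trace.re ≤
      (psqrt (psqrt ρ * B * psqrt ρ)).trace.re :=
  fidelity_monotone_right_general ρ A B hAB
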